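/- arXiv:1710.02954 — 2 statements merged into one kernel-verified Lean document; each statement's English description precedes it below -/
import Mathlib

section
/- Suppose T is independent of the tuple (Y 1 1, Y 0 1, Y 1 0, Y 0 0, S, X), for each t ∈ {0,1} the pair (Y t 1, Y t 0) is conditionally independent of S given σ(X), 0 < p < 1, and 0 < π < 1 P-almost surely. Define for t ∈ {0,1} the σ(X)-measurable random variable g_t = E[Y_obs · 1{T=t, S=1} | σ(X)] / P(T=t, S=1 | σ(X)) − E[Y_obs · 1{T=t, S=0} | σ(X)] / P(T=t, S=0 | σ(X)). Then δ equals the expectation of g₁ under the conditional measure P(· | {T=1}) minus the expectation of g₀ under the conditional measure P(· | {T=0}); that is, the ATME can be estimated by estimating the effect of S on Y separately within each treatment-level subset and taking the difference. -/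
open MeasureTheory ProbabilityTheory

namespace ATMEAux

variable {Ω : Type*}

/-- indicator-one function -/
noncomputable def I1 (A : Set Ω) : Ω → ℝ := A.indicator (fun _ => (1:ℝ))

lemma I1_mul_eq_indicator (A : Set Ω) (f : Ω → ℝ) :
    (fun ω => f ω * I1 A ω) = A.indicator f := by
  funext ω; by_cases h : ω ∈ A <;> simp [I1, Set.indicator_apply, h]

lemma I1_nonneg (A : Set Ω) (ω : Ω) : 0 ≤ I1 A ω := by
  by_cases h : ω ∈ A <;> simp [I1, Set.indicator_apply, h]

lemma I1_le_one (A : Set Ω) (ω : Ω) : I1 A ω ≤ 1 := by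
  by_cases h : ω ∈ A <;> simp [I1, Set.indicator_apply, h]

lemma abs_I1_le_one (A : Set Ω) (ω : Ω) : ‖I1 A ω‖ ≤ 1 := by
  rw [Real.norm_eq_abs, abs_le]
  exact ⟨by linarith [I1_nonneg A ω], I1_le_one A ω⟩

lemma I1_inter (A B : Set Ω) : I1 (A ∩ B) = fun ω => I1 A ω * I1 B ω := by
  funext ω; by_cases hA : ω ∈ A <;> by_cases hB : ω ∈ B <;>
    simp [I1, Set.indicator_apply, hA, hB]

section Meas
variable {m0 : MeasurableSpace Ω} (P : Measure Ω) [IsProbabilityMeasure P]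

lemma I1_stronglyMeasurable {m : MeasurableSpace Ω} {A : Set Ω} (hA : MeasurableSet[m] A) :
    StronglyMeasurable[m] (I1 A) :=
  stronglyMeasurable_const.indicator hA

lemma I1_integrable {A : Set Ω} (hA : MeasurableSet A) : Integrable (I1 A) P :=
  (integrable_const (1:ℝ)).indicator hA

lemma integral_I1 {A : Set Ω} (hA : MeasurableSet A) : ∫ ω, I1 A ω ∂P = (P A).toReal := by
  rw [I1, integral_indicator_const (1:ℝ) hA, smul_eq_mul, mul_one, measureReal_def]

/-- Pull-out property in integral form: for `w` bounded and `m`-measurable,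
`∫ w ⬝ E[h|m] = ∫ w ⬝ h`. -/
lemma integral_mul_condexp_eq {m : MeasurableSpace Ω} (hm : m ≤ m0) {w h : Ω → ℝ} {c : ℝ}
    (hw : StronglyMeasurable[m] w) (hwb : ∀ᵐ ω ∂P, ‖w ω‖ ≤ c) (hh : Integrable h P) :
    ∫ ω, w ω * (P[h|m]) ω ∂P = ∫ ω, w ω * h ω ∂P := by
  have hwh : Integrable (fun ω => w ω * h ω) P :=
    hh.bdd_mul ((hw.mono hm).aestronglyMeasurable) hwb
  have h1 : P[fun ω => w ω * h ω|m] =ᵐ[P] fun ω => w ω * (P[h|m]) ω := by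
    exact condExp_mul_of_stronglyMeasurable_left hw hwh hh
  calc ∫ ω, w ω * (P[h|m]) ω ∂P = ∫ ω, (P[fun ω => w ω * h ω|m]) ω ∂P :=
        (integral_congr_ae h1).symm
    _ = ∫ ω, w ω * h ω ∂P := integral_condExp hm

end Meas

/-- Weighted integration against an a.e.-bounded weight is continuous on `lpMeas _ _ _ 1 _`. -/
lemma continuous_weighted_integral {mV : MeasurableSpace Ω} {m0 : MeasurableSpace Ω}
    (P : Measure Ω) [IsProbabilityMeasure P]
    {w : Ω → ℝ} (hwm : AEStronglyMeasurable w P) (hwb : ∀ᵐ ω ∂P, ‖w ω‖ ≤ 1) :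
    Continuous fun f : lpMeas ℝ ℝ mV 1 P => ∫ ω, w ω * ((f : Lp ℝ 1 P) : Ω → ℝ) ω ∂P := by
  have key : ∀ f : Lp ℝ 1 P, Integrable (fun ω => w ω * (f : Ω → ℝ) ω) P := fun f =>
    (L1.integrable_coeFn f).bdd_mul hwm hwb
  refine LipschitzWith.continuous (K := 1) (LipschitzWith.of_dist_le_mul fun f g => ?_)
  rw [NNReal.coe_one, one_mul, Real.dist_eq]
  set d : Lp ℝ 1 P := (f : Lp ℝ 1 P) - (g : Lp ℝ 1 P) with hd
  have hdfg : (d : Ω → ℝ) =ᵐ[P] fun ω => ((f : Lp ℝ 1 P) : Ω → ℝ) ω - ((g : Lp ℝ 1 P) : Ω → ℝ) ω :=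
    Lp.coeFn_sub _ _
  have h1 : ∫ ω, w ω * ((f : Lp ℝ 1 P) : Ω → ℝ) ω ∂P - ∫ ω, w ω * ((g : Lp ℝ 1 P) : Ω → ℝ) ω ∂P
      = ∫ ω, w ω * (d : Ω → ℝ) ω ∂P := by
    rw [← integral_sub (key _) (key _)]
    refine integral_congr_ae ?_
    filter_upwards [hdfg] with ω hω
    rw [hω]; ring
  rw [h1]
  have h2 : |∫ ω, w ω * (d : Ω → ℝ) ω ∂P| ≤ ∫ ω, ‖(d : Ω → ℝ) ω‖ ∂P := by
    refine (norm_integral_le_integral_norm (fun ω => w ω * (d : Ω → ℝ) ω)).trans ?_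
    refine integral_mono_ae (key d).norm (L1.integrable_coeFn d).norm ?_
    filter_upwards [hwb] with ω hω
    rw [norm_mul]
    calc ‖w ω‖ * ‖(d : Ω → ℝ) ω‖ ≤ 1 * ‖(d : Ω → ℝ) ω‖ :=
          mul_le_mul_of_nonneg_right hω (norm_nonneg _)
      _ = ‖(d : Ω → ℝ) ω‖ := one_mul _
  refine h2.trans ?_
  rw [← L1.norm_eq_integral_norm d]
  rw [Subtype.dist_eq, dist_eq_norm]


/-- Independence factorization: if `T ⟂ W`, `Z` is `σ(W)`-measurable and integrable, and
`mX ≤ σ(W)`, then `E[Z·1{T=t} | mX] = P(T=t) · E[Z | mX]` a.e. -/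
lemma condexp_mul_indicator_indep {β γ : Type*} {mX : MeasurableSpace Ω} {m0 : MeasurableSpace Ω}
    [mβ : MeasurableSpace β] [mγ : MeasurableSpace γ] [MeasurableSingletonClass γ]
    (P : Measure Ω) [IsProbabilityMeasure P] {T : Ω → γ} {W : Ω → β}
    (hT : Measurable T) (hW : Measurable W) (hind : IndepFun T W P)
    (hmX : mX ≤ m0) (hmXW : mX ≤ mβ.comap W)
    {Z : Ω → ℝ} (hZm : Measurable[mβ.comap W] Z) (hZint : Integrable Z P) (t : γ) :
    P[fun ω => Z ω * I1 (T ⁻¹' {t}) ω|mX]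
      =ᵐ[P] fun ω => (P (T ⁻¹' {t})).toReal * (P[Z|mX]) ω := by
  have hTt : MeasurableSet (T ⁻¹' {t}) := hT (measurableSet_singleton t)
  have hprod : (fun ω => Z ω * I1 (T ⁻¹' {t}) ω) = (T ⁻¹' {t}).indicator Z :=
    I1_mul_eq_indicator _ _
  have hintZT : Integrable (fun ω => Z ω * I1 (T ⁻¹' {t}) ω) P := by
    rw [hprod]; exact hZint.indicator hTt
  refine (ae_eq_condExp_of_forall_setIntegral_eq hmX hintZT ?_ ?_ ?_).symm
  · intro A hA hAfin
    exact (integrable_condExp.const_mul _).integrableOn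
  · intro A hA hAfin
    -- LHS : ∫ x in A, pt * E[Z|mX] = pt * ∫ x in A, Z
    rw [integral_const_mul, setIntegral_condExp hmX hZint hA]
    -- RHS: express as full-space integral and use independence
    have hAm0 : MeasurableSet A := hmX _ hA
    have hAW : MeasurableSet[mβ.comap W] A := hmXW _ hA
    set u : Ω → ℝ := fun ω => Z ω * I1 A ω with hu_def
    set v : Ω → ℝ := I1 (T ⁻¹' {t}) with hv_def
    have hum : Measurable[mβ.comap W] u := by
      have : Measurable[mβ.comap W] (I1 A) :=
        (I1_stronglyMeasurable hAW).measurable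
      exact hZm.mul this
    have hvm : Measurable[mγ.comap T] v := by
      have hTt' : MeasurableSet[mγ.comap T] (T ⁻¹' {t}) :=
        ⟨{t}, measurableSet_singleton t, rfl⟩
      exact (I1_stronglyMeasurable hTt').measurable
    have hindep' : Indep (mγ.comap T) (mβ.comap W) P := (IndepFun_iff_Indep T W P).mp hind
    have hIF : IndepFun v u P := by
      rw [IndepFun_iff_Indep]
      exact indep_of_indep_of_le_left
        (indep_of_indep_of_le_right hindep' (Measurable.comap_le hum))
        (Measurable.comap_le hvm)
    have huint : Integrable u P := by
      rw [hu_def, I1_mul_eq_indicator]; exact hZint.indicator hAm0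
    have hvint : Integrable v P := I1_integrable P hTt
    have hkey : ∫ ω, v ω * u ω ∂P = (∫ ω, v ω ∂P) * ∫ ω, u ω ∂P :=
      hIF.integral_fun_mul_eq_mul_integral hvint.aestronglyMeasurable huint.aestronglyMeasurable
    have hLHS : ∫ x in A, (fun ω => Z ω * I1 (T ⁻¹' {t}) ω) x ∂P = ∫ ω, v ω * u ω ∂P := by
      rw [← integral_indicator hAm0]
      congr 1
      funext ω
      by_cases h : ω ∈ A <;>
        simp [hu_def, hv_def, I1, Set.indicator_apply, h, mul_comm, mul_left_comm]
    rw [hLHS, hkey, integral_I1 P hTt]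
    congr 1
    rw [hu_def, I1_mul_eq_indicator, integral_indicator hAm0]
  · exact (stronglyMeasurable_condExp.const_mul _).aestronglyMeasurable


/-- Conditional independence factorization: if `(V, S)` are conditionally independent given
`mX`, `f` is `σ(V)`-measurable and integrable, and `B = S⁻¹ u`, then
`E[f·1_B | mX] = E[f|mX] · E[1_B|mX]` a.e. -/
lemma condexp_mul_indicator_condIndep {β γ : Type*} {mX : MeasurableSpace Ω}
    [m0 : MeasurableSpace Ω] [StandardBorelSpace Ω] [Nonempty Ω]
    (P : Measure Ω) [IsProbabilityMeasure P] (hmX : mX ≤ m0)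
    [mβ : MeasurableSpace β] [mγ : MeasurableSpace γ]
    {V : Ω → β} {S : Ω → γ} (hV : Measurable V) (hS : Measurable S)
    (hci : CondIndepFun mX hmX V S P)
    {f : Ω → ℝ} (hfm : Measurable[mβ.comap V] f) (hfint : Integrable f P)
    {u : Set γ} (hu : MeasurableSet u) :
    P[fun ω => f ω * I1 (S ⁻¹' u) ω|mX]
      =ᵐ[P] fun ω => (P[f|mX]) ω * (P[I1 (S ⁻¹' u)|mX]) ω := by
  set B : Set Ω := S ⁻¹' u with hB_def
  have hBmeas : MeasurableSet B := hS hu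
  set π : Ω → ℝ := P[I1 B|mX] with hπ_def
  have hπm : StronglyMeasurable[mX] π := stronglyMeasurable_condExp
  have hπbdd : ∀ᵐ ω ∂P, ‖π ω‖ ≤ 1 := by
    have h0 : 0 ≤ᵐ[P] π := condExp_nonneg (Filter.Eventually.of_forall (I1_nonneg B))
    have h1 : π ≤ᵐ[P] fun _ => (1:ℝ) := by
      have := condExp_mono (μ := P) (m := mX) (I1_integrable P hBmeas)
        (integrable_const (1:ℝ))
        (Filter.Eventually.of_forall (I1_le_one B))
      rw [condExp_const hmX (1:ℝ)] at this
      exact this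
    filter_upwards [h0, h1] with ω hω0 hω1
    simp only [Pi.zero_apply] at hω0
    rw [Real.norm_eq_abs, abs_le]
    exact ⟨by linarith, hω1⟩
  have hmV : mβ.comap V ≤ m0 := hV.comap_le
  -- factorization of conditional probabilities from conditional independence
  have hfact : ∀ v : Set β, MeasurableSet v →
      P[I1 (V ⁻¹' v ∩ B)|mX] =ᵐ[P] fun ω => (P[I1 (V ⁻¹' v)|mX]) ω * π ω := by
    intro v hv
    have := (condIndepFun_iff_condExp_inter_preimage_eq_mul (μ := P) hV hS).mp hci v u hv hu
    exact this
  -- the crux: for every A ∈ mX, ∫ (π·1_A)·f = ∫ (1_B·1_A)·f for σ(V)-measurable integrable f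
  have crux : ∀ A : Set Ω, MeasurableSet[mX] A →
      ∀ ⦃g : Ω → ℝ⦄, MemLp g 1 P → AEStronglyMeasurable[mβ.comap V] g P →
      ∫ ω, (I1 B ω * I1 A ω) * g ω ∂P = ∫ ω, (π ω * I1 A ω) * g ω ∂P := by
    intro A hA
    have hAm0 : MeasurableSet A := hmX _ hA
    set w₁ : Ω → ℝ := fun ω => I1 B ω * I1 A ω with hw1_def
    set w₂ : Ω → ℝ := fun ω => π ω * I1 A ω with hw2_def
    have hw1m : AEStronglyMeasurable w₁ P :=
      (((I1_stronglyMeasurable hBmeas).mul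
        (I1_stronglyMeasurable hAm0)).aestronglyMeasurable)
    have hw2m : AEStronglyMeasurable w₂ P :=
      ((hπm.mono hmX).mul ((I1_stronglyMeasurable hA).mono hmX)).aestronglyMeasurable
    have hw1b : ∀ᵐ ω ∂P, ‖w₁ ω‖ ≤ 1 := by
      refine Filter.Eventually.of_forall fun ω => ?_
      rw [hw1_def, norm_mul]
      calc ‖I1 B ω‖ * ‖I1 A ω‖ ≤ 1 * 1 :=
        mul_le_mul (abs_I1_le_one B ω) (abs_I1_le_one A ω) (norm_nonneg _) zero_le_one
      _ = 1 := one_mul 1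
    have hw2b : ∀ᵐ ω ∂P, ‖w₂ ω‖ ≤ 1 := by
      filter_upwards [hπbdd] with ω hω
      rw [hw2_def, norm_mul]
      calc ‖π ω‖ * ‖I1 A ω‖ ≤ 1 * 1 :=
        mul_le_mul hω (abs_I1_le_one A ω) (norm_nonneg _) zero_le_one
      _ = 1 := one_mul 1
    have hw2mX : StronglyMeasurable[mX] w₂ := hπm.mul (I1_stronglyMeasurable hA)
    -- the property is proved by induction on L¹ functions measurable w.r.t. mV
    refine MemLp.induction_stronglyMeasurable hmV (by norm_num : (1:ENNReal) ≠ ⊤)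
      (fun g => ∫ ω, w₁ ω * g ω ∂P = ∫ ω, w₂ ω * g ω ∂P) ?_ ?_ ?_ ?_
    · -- indicators
      rintro c C hC hCfin
      obtain ⟨v, hv, rfl⟩ := hC
      have hCm0 : MeasurableSet (V ⁻¹' v) := hV hv
      have e1 : ∀ (w : Ω → ℝ), (fun ω => w ω * (V ⁻¹' v).indicator (fun _ => c) ω)
          = fun ω => c * (I1 (V ⁻¹' v) ω * w ω) := by
        intro w; funext ω
        by_cases h : ω ∈ V ⁻¹' v <;> simp [I1, Set.indicator_apply, h] <;> ring
      rw [e1 w₁, e1 w₂, integral_const_mul, integral_const_mul]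
      congr 1
      -- ∫ 1_C · (1_B 1_A) = ∫ 1_C · (π 1_A)
      have lhs_eq : ∫ ω, I1 (V ⁻¹' v) ω * w₁ ω ∂P
          = ∫ ω in A, (P[I1 (V ⁻¹' v ∩ B)|mX]) ω ∂P := by
        rw [setIntegral_condExp hmX (I1_integrable P (hCm0.inter hBmeas)) hA]
        rw [← integral_indicator hAm0]
        congr 1
        funext ω
        by_cases hA' : ω ∈ A <;> by_cases hB' : ω ∈ B <;> by_cases hC' : ω ∈ V ⁻¹' v <;>
          simp [hw1_def, I1, Set.indicator_apply, hA', hB', hC']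
      have rhs_eq : ∫ ω, I1 (V ⁻¹' v) ω * w₂ ω ∂P
          = ∫ ω in A, (P[I1 (V ⁻¹' v)|mX]) ω * π ω ∂P := by
        have h1 : ∫ ω, I1 (V ⁻¹' v) ω * w₂ ω ∂P = ∫ ω, w₂ ω * I1 (V ⁻¹' v) ω ∂P := by
          congr 1; funext ω; ring
        have h2 := integral_mul_condexp_eq P hmX hw2mX hw2b (I1_integrable P hCm0)
        rw [h1, ← h2, ← integral_indicator hAm0]
        congr 1
        funext ω
        by_cases hA' : ω ∈ A <;>
          simp [hw2_def, I1, Set.indicator_apply, hA'] <;> ring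
      rw [lhs_eq, rhs_eq]
      refine setIntegral_congr_ae hAm0 ?_
      filter_upwards [hfact v hv] with ω hω _
      exact hω
    · -- additivity
      intro g₁ g₂ hdisj hg₁ hg₂ hg₁m hg₂m h₁ h₂
      have hint : ∀ (w : Ω → ℝ), AEStronglyMeasurable w P → (∀ᵐ ω ∂P, ‖w ω‖ ≤ 1) →
          ∀ (g : Ω → ℝ), MemLp g 1 P → Integrable (fun ω => w ω * g ω) P := by
        intro w hwm hwb g hg
        exact (memLp_one_iff_integrable.mp hg).bdd_mul hwm hwb
      simp only [Pi.add_apply, mul_add]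
      rw [integral_add (hint w₁ hw1m hw1b g₁ hg₁) (hint w₁ hw1m hw1b g₂ hg₂),
        integral_add (hint w₂ hw2m hw2b g₁ hg₁) (hint w₂ hw2m hw2b g₂ hg₂), h₁, h₂]
    · -- closedness
      exact isClosed_eq (continuous_weighted_integral P hw1m hw1b)
        (continuous_weighted_integral P hw2m hw2b)
    · -- ae congruence
      intro g₁ g₂ hg hg₁ h₁
      have e : ∀ (w : Ω → ℝ), ∫ ω, w ω * g₁ ω ∂P = ∫ ω, w ω * g₂ ω ∂P := by
        intro w
        refine integral_congr_ae ?_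
        filter_upwards [hg] with ω hω
        rw [hω]
      rw [← e w₁, ← e w₂]
      exact h₁
  -- now conclude via the characterization of conditional expectation
  have hfB_int : Integrable (fun ω => f ω * I1 B ω) P := by
    rw [I1_mul_eq_indicator]; exact hfint.indicator hBmeas
  refine (ae_eq_condExp_of_forall_setIntegral_eq hmX hfB_int ?_ ?_ ?_).symm
  · intro A hA hAfin
    have : Integrable (fun ω => (P[f|mX]) ω * π ω) P :=
      (Integrable.bdd_mul (c := 1) integrable_condExp
        ((hπm.mono hmX).aestronglyMeasurable) hπbdd).congr
        (Filter.Eventually.of_forall fun ω => mul_comm (π ω) ((P[f|mX]) ω))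
    exact this.integrableOn
  · intro A hA hAfin
    have hAm0 : MeasurableSet A := hmX _ hA
    have key := crux A hA (memLp_one_iff_integrable.mpr hfint)
      ⟨f, hfm.stronglyMeasurable, Filter.EventuallyEq.rfl⟩
    have hwmX : StronglyMeasurable[mX] (fun ω => π ω * I1 A ω) :=
      hπm.mul (I1_stronglyMeasurable hA)
    have hwb' : ∀ᵐ ω ∂P, ‖π ω * I1 A ω‖ ≤ 1 := by
      filter_upwards [hπbdd] with ω hω
      rw [norm_mul]
      calc ‖π ω‖ * ‖I1 A ω‖ ≤ 1 * 1 :=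
        mul_le_mul hω (abs_I1_le_one A ω) (norm_nonneg _) zero_le_one
      _ = 1 := one_mul 1
    have h1 : ∫ x in A, ((P[f|mX]) x * π x) ∂P
        = ∫ ω, (π ω * I1 A ω) * (P[f|mX]) ω ∂P := by
      rw [← integral_indicator hAm0]
      congr 1; funext ω
      by_cases h : ω ∈ A <;> simp [I1, Set.indicator_apply, h] <;> ring
    have h2 : ∫ ω, (π ω * I1 A ω) * (P[f|mX]) ω ∂P = ∫ ω, (π ω * I1 A ω) * f ω ∂P :=
      integral_mul_condexp_eq P hmX hwmX hwb' hfint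
    have h3 : ∫ x in A, (f x * I1 B x) ∂P = ∫ ω, (I1 B ω * I1 A ω) * f ω ∂P := by
      rw [← integral_indicator hAm0]
      congr 1; funext ω
      by_cases h : ω ∈ A <;> simp [I1, Set.indicator_apply, h] <;> ring
    rw [h1, h2, h3, ← key]
  · exact (stronglyMeasurable_condExp.mul stronglyMeasurable_condExp).aestronglyMeasurable


end ATMEAux

open ATMEAux

/-- Conditional probability of an event `A` given a sub-σ-algebra `mX`, as a real-valued
random variable: `P(A | mX) = E[1_A | mX]`. -/
noncomputable def condProb {Ω : Type*} [MeasurableSpace Ω] (P : Measure Ω)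
    (mX : MeasurableSpace Ω) (A : Set Ω) : Ω → ℝ :=
  P[A.indicator (fun _ => (1 : ℝ)) | mX]

/-- The within-treatment-level contrast
`g_t = E[Y_obs 1{T=t,S=1} | mX] / P(T=t,S=1 | mX) - E[Y_obs 1{T=t,S=0} | mX] / P(T=t,S=0 | mX)`,
a `σ(X)`-measurable random variable estimating the effect of the moderator `S` on the outcome
within the subset with treatment level `t`. -/
noncomputable def withinTreatmentContrast {Ω : Type*} [m0 : MeasurableSpace Ω] (P : Measure Ω)
    (mX : MeasurableSpace Ω) (T S : Ω → Fin 2) (Y : Fin 2 → Fin 2 → Ω → ℝ)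
    (t : Fin 2) : Ω → ℝ := fun ω =>
  (P[fun ω' => Y (T ω') (S ω') ω' *
      ({ω'' | T ω'' = t ∧ S ω'' = 1}.indicator (fun _ => (1 : ℝ)) ω') | mX]) ω /
    @condProb Ω m0 P mX {ω' | T ω' = t ∧ S ω' = 1} ω -
  (P[fun ω' => Y (T ω') (S ω') ω' *
      ({ω'' | T ω'' = t ∧ S ω'' = 0}.indicator (fun _ => (1 : ℝ)) ω') | mX]) ω /
    @condProb Ω m0 P mX {ω' | T ω' = t ∧ S ω' = 0} ω

/-- **Parallel estimation of the ATME.** Under randomization of the treatment, conditional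
independence of the potential outcomes and the moderator given `σ(X)`, `0 < P(T=1) < 1`, and
`0 < P(S=1 | σ(X)) < 1` a.s., the ATME equals the expectation of `g₁` under the conditional
measure `P(· | T=1)` minus the expectation of `g₀` under the conditional measure `P(· | T=0)`:
the ATME can be estimated by estimating the effect of `S` on `Y` separately within each
treatment-level subset and taking the difference. -/
theorem atme_parallel_estimation
    {Ω 𝒳 : Type*} [MeasurableSpace Ω] [StandardBorelSpace Ω] [Nonempty Ω]
    [MeasurableSpace 𝒳]
    (P : Measure Ω) [IsProbabilityMeasure P]
    (T S : Ω → Fin 2) (X : Ω → 𝒳) (Y : Fin 2 → Fin 2 → Ω → ℝ)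
    (hT : Measurable T) (hS : Measurable S) (hX : Measurable X)
    (hY : ∀ t s : Fin 2, Measurable (Y t s))
    (hYint : ∀ t s : Fin 2, Integrable (Y t s) P)
    (hindep : IndepFun T (fun ω => (Y 1 1 ω, Y 0 1 ω, Y 1 0 ω, Y 0 0 ω, S ω, X ω)) P)
    (hcond : ∀ t : Fin 2,
      CondIndepFun (MeasurableSpace.comap X inferInstance) hX.comap_le
        (fun ω => (Y t 1 ω, Y t 0 ω)) S P)
    (hp0 : 0 < (P {ω | T ω = 1}).toReal) (hp1 : (P {ω | T ω = 1}).toReal < 1)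
    (hπ : ∀ᵐ ω ∂P,
      0 < condProb P (MeasurableSpace.comap X inferInstance) {ω' | S ω' = 1} ω ∧
        condProb P (MeasurableSpace.comap X inferInstance) {ω' | S ω' = 1} ω < 1) :
    ∫ ω, ((Y 1 1 ω - Y 0 1 ω) - (Y 1 0 ω - Y 0 0 ω)) ∂P =
      ∫ ω, withinTreatmentContrast P (MeasurableSpace.comap X inferInstance) T S Y 1 ω
          ∂(ProbabilityTheory.cond P {ω' | T ω' = 1}) -
        ∫ ω, withinTreatmentContrast P (MeasurableSpace.comap X inferInstance) T S Y 0 ω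
          ∂(ProbabilityTheory.cond P {ω' | T ω' = 0}) := by
  have hmX : MeasurableSpace.comap X inferInstance ≤ ‹MeasurableSpace Ω› := hX.comap_le
  set W : Ω → ℝ × ℝ × ℝ × ℝ × Fin 2 × 𝒳 :=
    fun ω => (Y 1 1 ω, Y 0 1 ω, Y 1 0 ω, Y 0 0 ω, S ω, X ω) with hW_def
  have hWm : Measurable W :=
    (hY 1 1).prodMk ((hY 0 1).prodMk ((hY 1 0).prodMk ((hY 0 0).prodMk
      (hS.prodMk hX))))
  have hWsM : Measurable[MeasurableSpace.comap W inferInstance] W :=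
    Measurable.of_comap_le le_rfl
  have hmXW : MeasurableSpace.comap X inferInstance
      ≤ MeasurableSpace.comap W inferInstance := by
    have h1 : MeasurableSpace.comap W
        (MeasurableSpace.comap (fun p : ℝ × ℝ × ℝ × ℝ × Fin 2 × 𝒳 => p.2.2.2.2.2)
          inferInstance)
        = MeasurableSpace.comap X inferInstance := MeasurableSpace.comap_comp
    rw [← h1]
    exact MeasurableSpace.comap_mono
      (Measurable.comap_le (measurable_snd.comp (measurable_snd.comp
        (measurable_snd.comp (measurable_snd.comp measurable_snd)))))
  have hYW : ∀ t s : Fin 2, Measurable[MeasurableSpace.comap W inferInstance] (Y t s) := by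
    intro t s
    fin_cases t <;> fin_cases s
    · exact hWsM.snd.snd.snd.fst
    · exact hWsM.snd.fst
    · exact hWsM.snd.snd.fst
    · exact hWsM.fst
  have hSW : Measurable[MeasurableSpace.comap W inferInstance] S := hWsM.snd.snd.snd.snd.fst
  -- the key per-treatment-level computation
  have key : ∀ t : Fin 2, 0 < (P {ω' | T ω' = t}).toReal →
      ∫ ω, withinTreatmentContrast P (MeasurableSpace.comap X inferInstance) T S Y t ω
        ∂(ProbabilityTheory.cond P {ω' | T ω' = t})
      = (∫ ω, Y t 1 ω ∂P) - ∫ ω, Y t 0 ω ∂P := by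
    intro t hpt
    have hptne : (P {ω' | T ω' = t}).toReal ≠ 0 := ne_of_gt hpt
    have hTt : MeasurableSet {ω' | T ω' = t} := hT (measurableSet_singleton t)
    -- numerator rewriting
    have hnum_eq : ∀ s : Fin 2, (fun ω' => Y (T ω') (S ω') ω' *
        ({ω'' | T ω'' = t ∧ S ω'' = s}.indicator (fun _ => (1 : ℝ)) ω'))
        = fun ω' => (Y t s ω' * I1 (S ⁻¹' {s}) ω') * I1 (T ⁻¹' {t}) ω' := by
      intro s; funext ω
      by_cases h1 : T ω = t <;> by_cases h2 : S ω = s <;>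
        simp [I1, Set.indicator_apply, h1, h2]
    have hden_eq : ∀ s : Fin 2, ({ω'' | T ω'' = t ∧ S ω'' = s}.indicator (fun _ => (1 : ℝ)))
        = fun ω' => I1 (S ⁻¹' {s}) ω' * I1 (T ⁻¹' {t}) ω' := by
      intro s; funext ω
      by_cases h1 : T ω = t <;> by_cases h2 : S ω = s <;>
        simp [I1, Set.indicator_apply, h1, h2]
    have hZm : ∀ s : Fin 2, Measurable[MeasurableSpace.comap W inferInstance]
        (fun ω => Y t s ω * I1 (S ⁻¹' {s}) ω) := fun s =>
      (hYW t s).mul (I1_stronglyMeasurable (hSW (measurableSet_singleton s))).measurable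
    have hZint : ∀ s : Fin 2, Integrable (fun ω => Y t s ω * I1 (S ⁻¹' {s}) ω) P := by
      intro s
      rw [I1_mul_eq_indicator]
      exact (hYint t s).indicator (hS (measurableSet_singleton s))
    -- apply the independence lemma to numerators and denominators
    have hnum : ∀ s : Fin 2, (P[fun ω' => Y (T ω') (S ω') ω' *
        ({ω'' | T ω'' = t ∧ S ω'' = s}.indicator (fun _ => (1 : ℝ)) ω')
          | MeasurableSpace.comap X inferInstance])
        =ᵐ[P] fun ω => (P {ω' | T ω' = t}).toReal *
          (P[fun ω' => Y t s ω' * I1 (S ⁻¹' {s}) ω' | MeasurableSpace.comap X inferInstance]) ω := by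
      intro s
      rw [hnum_eq s]
      exact condexp_mul_indicator_indep P hT hWm hindep hmX hmXW (hZm s) (hZint s) t
    have hden : ∀ s : Fin 2, condProb P (MeasurableSpace.comap X inferInstance)
        {ω' | T ω' = t ∧ S ω' = s}
        =ᵐ[P] fun ω => (P {ω' | T ω' = t}).toReal *
          (P[I1 (S ⁻¹' {s}) | MeasurableSpace.comap X inferInstance]) ω := by
      intro s
      show P[({ω'' | T ω'' = t ∧ S ω'' = s}.indicator (fun _ => (1 : ℝ)))
        | MeasurableSpace.comap X inferInstance] =ᵐ[P] _
      rw [hden_eq s]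
      exact condexp_mul_indicator_indep P hT hWm hindep hmX hmXW
        (I1_stronglyMeasurable (hSW (measurableSet_singleton s))).measurable
        (I1_integrable P (hS (measurableSet_singleton s))) t
    -- conditional independence factorization
    have hpair : Measurable (fun ω => (Y t 1 ω, Y t 0 ω)) := (hY t 1).prodMk (hY t 0)
    have hfmV : ∀ s : Fin 2,
        Measurable[MeasurableSpace.comap (fun ω => (Y t 1 ω, Y t 0 ω)) inferInstance]
          (Y t s) := by
      intro s
      fin_cases s
      · exact (Measurable.of_comap_le le_rfl).snd
      · exact (Measurable.of_comap_le le_rfl).fst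
    have hfac : ∀ s : Fin 2,
        (P[fun ω' => Y t s ω' * I1 (S ⁻¹' {s}) ω' | MeasurableSpace.comap X inferInstance])
        =ᵐ[P] fun ω => (P[Y t s | MeasurableSpace.comap X inferInstance]) ω *
          (P[I1 (S ⁻¹' {s}) | MeasurableSpace.comap X inferInstance]) ω := fun s =>
      condexp_mul_indicator_condIndep P hmX hpair hS (hcond t) (hfmV s) (hYint t s)
        (measurableSet_singleton s)
    -- positivity of the conditional moderator probabilities
    have hπ1 : ∀ᵐ ω ∂P,
        0 < (P[I1 (S ⁻¹' {(1 : Fin 2)}) | MeasurableSpace.comap X inferInstance]) ω ∧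
        (P[I1 (S ⁻¹' {(1 : Fin 2)}) | MeasurableSpace.comap X inferInstance]) ω < 1 := hπ
    have hind01 : I1 (S ⁻¹' ({(0 : Fin 2)} : Set (Fin 2)))
        = fun ω => (1 : ℝ) - I1 (S ⁻¹' {(1 : Fin 2)}) ω := by
      funext ω
      have h2 : ∀ a : Fin 2, (a = 0 ↔ ¬ a = 1) := by decide
      by_cases h : S ω = 1 <;>
        simp [I1, Set.indicator_apply, h, (h2 (S ω))]
    have hπ0 : (P[I1 (S ⁻¹' ({(0 : Fin 2)} : Set (Fin 2))) | MeasurableSpace.comap X inferInstance])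
        =ᵐ[P] fun ω =>
          1 - (P[I1 (S ⁻¹' {(1 : Fin 2)}) | MeasurableSpace.comap X inferInstance]) ω := by
      rw [hind01]
      refine (condExp_sub (integrable_const (1 : ℝ))
        (I1_integrable P (hS (measurableSet_singleton 1)))
        (m := MeasurableSpace.comap X inferInstance)).trans ?_
      rw [condExp_const hmX]
      exact Filter.Eventually.of_forall fun ω => rfl
    -- the contrast equals the difference of conditional expectations a.e.
    have hcontrast : withinTreatmentContrast P (MeasurableSpace.comap X inferInstance) T S Y t
        =ᵐ[P] fun ω => (P[Y t 1 | MeasurableSpace.comap X inferInstance]) ω -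
          (P[Y t 0 | MeasurableSpace.comap X inferInstance]) ω := by
      filter_upwards [hnum 1, hnum 0, hden 1, hden 0, hfac 1, hfac 0, hπ1, hπ0]
        with ω e1 e0 d1 d0 f1 f0 p1 p0
      show _ / _ - _ / _ = _
      rw [e1, e0, d1, d0, f1, f0, p0]
      have hp1ne : (P[I1 (S ⁻¹' {(1 : Fin 2)}) | MeasurableSpace.comap X inferInstance]) ω ≠ 0 :=
        ne_of_gt p1.1
      have hp0ne : (1 : ℝ) -
          (P[I1 (S ⁻¹' {(1 : Fin 2)}) | MeasurableSpace.comap X inferInstance]) ω ≠ 0 := by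
        have := p1.2; intro hc; linarith
      field_simp
    -- integrate over the conditional measure
    have hht_int : Integrable (fun ω => (P[Y t 1 | MeasurableSpace.comap X inferInstance]) ω -
        (P[Y t 0 | MeasurableSpace.comap X inferInstance]) ω) P :=
      integrable_condExp.sub integrable_condExp
    have haeT : withinTreatmentContrast P (MeasurableSpace.comap X inferInstance) T S Y t
        =ᵐ[ProbabilityTheory.cond P {ω' | T ω' = t}]
        fun ω => (P[Y t 1 | MeasurableSpace.comap X inferInstance]) ω -
          (P[Y t 0 | MeasurableSpace.comap X inferInstance]) ω := by
      rw [ProbabilityTheory.cond]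
      exact Measure.ae_smul_measure (ae_restrict_of_ae hcontrast) _
    rw [integral_congr_ae haeT, ProbabilityTheory.cond, integral_smul_measure]
    -- independence of the treatment indicator and the mX-measurable function
    have hhtm : Measurable[MeasurableSpace.comap X inferInstance]
        (fun ω => (P[Y t 1 | MeasurableSpace.comap X inferInstance]) ω -
          (P[Y t 0 | MeasurableSpace.comap X inferInstance]) ω) :=
      (stronglyMeasurable_condExp.sub stronglyMeasurable_condExp).measurable
    have hhtW : Measurable[MeasurableSpace.comap W inferInstance]
        (fun ω => (P[Y t 1 | MeasurableSpace.comap X inferInstance]) ω -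
          (P[Y t 0 | MeasurableSpace.comap X inferInstance]) ω) :=
      hhtm.mono hmXW le_rfl
    have hvm : Measurable[MeasurableSpace.comap T inferInstance] (I1 (T ⁻¹' {t})) := by
      have hTt' : MeasurableSet[MeasurableSpace.comap T inferInstance] (T ⁻¹' {t}) :=
        ⟨{t}, measurableSet_singleton t, rfl⟩
      exact (I1_stronglyMeasurable hTt').measurable
    have hIF : IndepFun (fun ω => (P[Y t 1 | MeasurableSpace.comap X inferInstance]) ω -
        (P[Y t 0 | MeasurableSpace.comap X inferInstance]) ω) (I1 (T ⁻¹' {t})) P := by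
      rw [IndepFun_iff_Indep]
      refine indep_of_indep_of_le_left (indep_of_indep_of_le_right ?_ (Measurable.comap_le hvm))
        (Measurable.comap_le hhtW)
      exact ((IndepFun_iff_Indep T W P).mp hindep).symm
    have hkey : ∫ ω, (fun ω' => (P[Y t 1 | MeasurableSpace.comap X inferInstance]) ω' -
          (P[Y t 0 | MeasurableSpace.comap X inferInstance]) ω') ω * I1 (T ⁻¹' {t}) ω ∂P
        = ((∫ ω, ((P[Y t 1 | MeasurableSpace.comap X inferInstance]) ω -
            (P[Y t 0 | MeasurableSpace.comap X inferInstance]) ω) ∂P)) *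
          (P {ω' | T ω' = t}).toReal := by
      have := hIF.integral_fun_mul_eq_mul_integral hht_int.aestronglyMeasurable
        (I1_integrable P hTt).aestronglyMeasurable
      rw [← integral_I1 P hTt]
      exact this
    have hset : ∫ ω in {ω' | T ω' = t},
        ((P[Y t 1 | MeasurableSpace.comap X inferInstance]) ω -
          (P[Y t 0 | MeasurableSpace.comap X inferInstance]) ω) ∂P
        = ((∫ ω, ((P[Y t 1 | MeasurableSpace.comap X inferInstance]) ω -
            (P[Y t 0 | MeasurableSpace.comap X inferInstance]) ω) ∂P)) *
          (P {ω' | T ω' = t}).toReal := by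
      rw [← hkey, ← integral_indicator hTt]
      congr 1
      exact (I1_mul_eq_indicator (T ⁻¹' {t}) _).symm ▸ rfl
    rw [hset]
    have hE : ∫ ω, ((P[Y t 1 | MeasurableSpace.comap X inferInstance]) ω -
        (P[Y t 0 | MeasurableSpace.comap X inferInstance]) ω) ∂P
        = (∫ ω, Y t 1 ω ∂P) - ∫ ω, Y t 0 ω ∂P := by
      rw [integral_sub integrable_condExp integrable_condExp,
        integral_condExp hmX, integral_condExp hmX]
    rw [hE, ENNReal.toReal_inv, smul_eq_mul]
    rw [mul_comm ((∫ ω, Y t 1 ω ∂P) - ∫ ω, Y t 0 ω ∂P), ← mul_assoc,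
      inv_mul_cancel₀ hptne, one_mul]
  -- probability of T = 0
  have hp0' : 0 < (P {ω' | T ω' = (0 : Fin 2)}).toReal := by
    have hcompl : {ω' | T ω' = (0 : Fin 2)} = {ω' | T ω' = (1 : Fin 2)}ᶜ := by
      ext ω
      have h2 : ∀ a : Fin 2, (a = 0 ↔ ¬ a = 1) := by decide
      simpa using h2 (T ω)
    have hmeas1 : MeasurableSet {ω' | T ω' = (1 : Fin 2)} := hT (measurableSet_singleton 1)
    rw [hcompl, measure_compl hmeas1 (measure_ne_top P _),
      measure_univ, ENNReal.toReal_sub_of_le prob_le_one ENNReal.one_ne_top,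
      ENNReal.toReal_one]
    linarith
  have hL : ∫ ω, ((Y 1 1 ω - Y 0 1 ω) - (Y 1 0 ω - Y 0 0 ω)) ∂P
      = ((∫ ω, Y 1 1 ω ∂P) - ∫ ω, Y 0 1 ω ∂P) - ((∫ ω, Y 1 0 ω ∂P) - ∫ ω, Y 0 0 ω ∂P) := by
    have h1 : Integrable (fun ω => Y 1 1 ω - Y 0 1 ω) P := (hYint 1 1).sub (hYint 0 1)
    have h2 : Integrable (fun ω => Y 1 0 ω - Y 0 0 ω) P := (hYint 1 0).sub (hYint 0 0)
    calc ∫ ω, ((Y 1 1 ω - Y 0 1 ω) - (Y 1 0 ω - Y 0 0 ω)) ∂P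
        = (∫ ω, (Y 1 1 ω - Y 0 1 ω) ∂P) - ∫ ω, (Y 1 0 ω - Y 0 0 ω) ∂P := integral_sub h1 h2
      _ = _ := by
          rw [integral_sub (hYint 1 1) (hYint 0 1), integral_sub (hYint 1 0) (hYint 0 0)]
  rw [hL, key 1 hp0, key 0 hp0']
  ring
end

section
/- Suppose T is independent of the tuple (Y 1 1, Y 0 1, Y 1 0, Y 0 0, S, X), for each t ∈ {0,1} the pair (Y t 1, Y t 0) is conditionally independent of S given σ(X), 0 < p < 1, and 0 < π < 1 P-almost surely. Then for every t, s ∈ {0,1}, P-almost surely E[ Y_obs · 1{T=t, S=s} | σ(X) ] / P(T=t, S=s | σ(X)) = E[ Y t s | σ(X) ]; i.e., the observed conditional mean of the outcome within each treatment–moderator cell, given the covariates, identifies the conditional mean of the corresponding potential outcome. -/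
open MeasureTheory ProbabilityTheory

open scoped NNReal

lemma measurable_comap_self {Ω δ : Type*} [m : MeasurableSpace δ] (W : Ω → δ) :
    @Measurable Ω δ (MeasurableSpace.comap W m) m W := fun _s hs => ⟨_s, hs, rfl⟩

lemma indicator_norm_le_one {Ω : Type*} (A : Set Ω) (ω : Ω) :
    ‖A.indicator (fun _ => (1:ℝ)) ω‖ ≤ 1 := by
  by_cases hω : ω ∈ A <;> simp [hω]

lemma pullout_indep {Ω γ δ : Type*} {mX : MeasurableSpace Ω} [mΩ : MeasurableSpace Ω]
    [mγ : MeasurableSpace γ] [mδ : MeasurableSpace δ]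
    (P : Measure Ω) [IsProbabilityMeasure P]
    {T : Ω → γ} {W : Ω → δ} (hT : Measurable T) (hW : Measurable W)
    (hindep : IndepFun T W P)
    (hXW : mX ≤ MeasurableSpace.comap W mδ)
    {h : Ω → ℝ} (hh : StronglyMeasurable[MeasurableSpace.comap W mδ] h)
    (hint : Integrable h P) {A : Set γ} (hA : MeasurableSet A) :
    P[fun ω => (T ⁻¹' A).indicator (fun _ => (1:ℝ)) ω * h ω | mX]
      =ᵐ[P] fun ω => (P (T ⁻¹' A)).toReal * (P[h | mX]) ω := by
  have hWle : MeasurableSpace.comap W mδ ≤ mΩ := hW.comap_le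
  have hTA : MeasurableSet[MeasurableSpace.comap T mγ] (T ⁻¹' A) := ⟨A, hA, rfl⟩
  set c : ℝ := (P (T ⁻¹' A)).toReal with hc
  have hstep1 : P[(T ⁻¹' A).indicator (fun _ => (1:ℝ)) | MeasurableSpace.comap W mδ]
      =ᵐ[P] fun _ => c := by
    have h1 := condExp_indep_eq (μ := P) (f := (T ⁻¹' A).indicator (fun _ => (1:ℝ))) hT.comap_le hWle
      (stronglyMeasurable_const.indicator hTA) ((IndepFun_iff_Indep _ _ _).mp hindep)
    refine h1.trans ?_
    exact Filter.Eventually.of_forall fun _ => integral_indicator_one (hT hA)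
  have hint_ind : Integrable ((T ⁻¹' A).indicator (fun _ => (1:ℝ))) P :=
    (integrable_const (1:ℝ)).indicator (hT hA)
  have hint_mul : Integrable (h * (T ⁻¹' A).indicator (fun _ => (1:ℝ))) P := by
    have h2 := hint.bdd_mul (c := 1)
      (((stronglyMeasurable_const.indicator hTA).mono hT.comap_le).aestronglyMeasurable)
      (Filter.Eventually.of_forall (indicator_norm_le_one _))
    exact h2.congr (Filter.Eventually.of_forall (fun ω => mul_comm _ _))
  have hmul : P[h * (T ⁻¹' A).indicator (fun _ => (1:ℝ)) | MeasurableSpace.comap W mδ]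
      =ᵐ[P] fun ω => c * h ω := by
    refine (condExp_mul_of_stronglyMeasurable_left hh hint_mul hint_ind).trans ?_
    filter_upwards [hstep1] with ω hω
    simp only [Pi.mul_apply, hω, mul_comm]
  have htower := (condExp_condExp_of_le (μ := P)
    (f := h * (T ⁻¹' A).indicator (fun _ => (1:ℝ))) hXW hWle).symm
  have hfun : (fun ω => (T ⁻¹' A).indicator (fun _ => (1:ℝ)) ω * h ω)
      = h * (T ⁻¹' A).indicator (fun _ => (1:ℝ)) := by
    funext ω; simp [mul_comm]
  rw [hfun]
  refine htower.trans ?_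
  refine (condExp_congr_ae hmul).trans ?_
  have h3 : (fun ω => c * h ω) = c • h := by funext ω; simp
  rw [h3]
  refine (condExp_smul c h mX).trans ?_
  exact Filter.Eventually.of_forall (fun ω => by simp)

lemma condexp_indicator_sup {Ω γ : Type*} {mX : MeasurableSpace Ω} [mΩ : MeasurableSpace Ω]
    [StandardBorelSpace Ω] [Nonempty Ω] [mγ : MeasurableSpace γ]
    (P : Measure Ω) [IsProbabilityMeasure P]
    (hle : mX ≤ mΩ)
    {Z : Ω → γ} {S : Ω → Fin 2} (hZ : Measurable Z) (hS : Measurable S)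
    (hcond : CondIndepFun mX hle Z S P) (u : Set (Fin 2)) :
    P[(S ⁻¹' u).indicator (fun _ => (1:ℝ)) | mX ⊔ MeasurableSpace.comap Z mγ]
      =ᵐ[P] P[(S ⁻¹' u).indicator (fun _ => (1:ℝ)) | mX] := by
  have hm2 : mX ⊔ MeasurableSpace.comap Z mγ ≤ mΩ := sup_le hle hZ.comap_le
  have hu : MeasurableSet u := (Set.to_countable u).measurableSet
  have hB : MeasurableSet (S ⁻¹' u) := hS hu
  set B := S ⁻¹' u with hBdef
  set π : Ω → ℝ := P[B.indicator (fun _ => (1:ℝ)) | mX] with hπdef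
  have hind_int : Integrable (B.indicator (fun _ => (1:ℝ))) P :=
    (integrable_const (1:ℝ)).indicator hB
  have hπbd : ∀ᵐ ω ∂P, |π ω| ≤ ((1:ℝ≥0) : ℝ) :=
    ae_bdd_condExp_of_ae_bdd (R := 1) (Filter.Eventually.of_forall fun ω => by
      simpa using indicator_norm_le_one B ω)
  have key : ∀ A : Set Ω, MeasurableSet[mX ⊔ MeasurableSpace.comap Z mγ] A →
      ∫ x in A, π x ∂P = ∫ x in A, B.indicator (fun _ => (1:ℝ)) x ∂P := by
    have h_eq : (mX ⊔ MeasurableSpace.comap Z mγ) = MeasurableSpace.generateFrom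
        {A | ∃ A₁, MeasurableSet[mX] A₁ ∧ ∃ A₂, MeasurableSet[MeasurableSpace.comap Z mγ] A₂ ∧ A = A₁ ∩ A₂} := by
      apply le_antisymm
      · refine sup_le ?_ ?_
        · intro A hA
          exact MeasurableSpace.measurableSet_generateFrom
            ⟨A, hA, Set.univ, MeasurableSet.univ, (Set.inter_univ A).symm⟩
        · intro A hA
          exact MeasurableSpace.measurableSet_generateFrom
            ⟨Set.univ, MeasurableSet.univ, A, hA, (Set.univ_inter A).symm⟩
      · refine MeasurableSpace.generateFrom_le ?_
        rintro A ⟨A₁, hA₁, A₂, hA₂, rfl⟩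
        exact ((le_sup_left : mX ≤ mX ⊔ MeasurableSpace.comap Z mγ) _ hA₁).inter ((le_sup_right : MeasurableSpace.comap Z mγ ≤ mX ⊔ MeasurableSpace.comap Z mγ) _ hA₂)
    have h_pi : IsPiSystem
        {A | ∃ A₁, MeasurableSet[mX] A₁ ∧ ∃ A₂, MeasurableSet[MeasurableSpace.comap Z mγ] A₂ ∧ A = A₁ ∩ A₂} := by
      rintro _ ⟨a₁, ha₁, a₂, ha₂, rfl⟩ _ ⟨b₁, hb₁, b₂, hb₂, rfl⟩ _
      exact ⟨a₁ ∩ b₁, ha₁.inter hb₁, a₂ ∩ b₂, ha₂.inter hb₂, by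
        rw [Set.inter_inter_inter_comm]⟩
    intro A hA
    refine MeasurableSpace.induction_on_inter (m := mX ⊔ MeasurableSpace.comap Z mγ)
      (C := fun A _ => ∫ x in A, π x ∂P = ∫ x in A, B.indicator (fun _ => (1:ℝ)) x ∂P)
      h_eq h_pi ?_ ?_ ?_ ?_ A hA
    · simp
    · rintro A' ⟨A₁, hA₁, A₂, hA₂, rfl⟩
      obtain ⟨u₂, hu₂, rfl⟩ := hA₂
      have hA₁m : MeasurableSet A₁ := hle _ hA₁
      have hA₂m : MeasurableSet (Z ⁻¹' u₂) := hZ hu₂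
      have hind₂ : Integrable ((Z ⁻¹' u₂).indicator (fun _ => (1:ℝ))) P :=
        (integrable_const (1:ℝ)).indicator hA₂m
      have hπ_int_mul : Integrable (π * (Z ⁻¹' u₂).indicator (fun _ => (1:ℝ))) P := by
        refine hind₂.bdd_mul (c := 1)
          ((stronglyMeasurable_condExp.mono hle).aestronglyMeasurable) ?_
        filter_upwards [hπbd] with ω hω
        simpa [Real.norm_eq_abs] using hω
      have hpull : P[π * (Z ⁻¹' u₂).indicator (fun _ => (1:ℝ)) | mX]
          =ᵐ[P] π * P[(Z ⁻¹' u₂).indicator (fun _ => (1:ℝ)) | mX] :=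
        condExp_mul_of_stronglyMeasurable_left stronglyMeasurable_condExp hπ_int_mul hind₂
      have hCI := (condIndepFun_iff_condExp_inter_preimage_eq_mul (m' := mX)
        (hm' := hle) (μ := P) hZ hS).mp hcond u₂ u hu₂ hu
      -- LHS
      have hL : ∫ x in A₁ ∩ Z ⁻¹' u₂, π x ∂P
          = ∫ x in A₁, (π * P[(Z ⁻¹' u₂).indicator (fun _ => (1:ℝ)) | mX]) x ∂P := by
        rw [← setIntegral_indicator hA₂m]
        have h1 : (Z ⁻¹' u₂).indicator π = π * (Z ⁻¹' u₂).indicator (fun _ => (1:ℝ)) := by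
          funext ω
          by_cases hω : ω ∈ Z ⁻¹' u₂ <;> simp [hω]
        rw [h1, ← setIntegral_condExp hle hπ_int_mul hA₁]
        exact integral_congr_ae (ae_restrict_of_ae hpull)
      -- RHS
      have hR : ∫ x in A₁ ∩ Z ⁻¹' u₂, B.indicator (fun _ => (1:ℝ)) x ∂P
          = ∫ x in A₁, (P[(Z ⁻¹' u₂).indicator (fun _ => (1:ℝ)) | mX] * π) x ∂P := by
        rw [← setIntegral_indicator hA₂m]
        have h2 : (Z ⁻¹' u₂).indicator (B.indicator (fun _ => (1:ℝ)))
            = (Z ⁻¹' u₂ ∩ B).indicator (fun _ => (1:ℝ)) := Set.indicator_indicator _ _ _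
        rw [h2, ← setIntegral_condExp hle ((integrable_const (1:ℝ)).indicator (hA₂m.inter hB)) hA₁]
        refine integral_congr_ae (ae_restrict_of_ae ?_)
        exact hCI
      rw [hL, hR]
      exact integral_congr_ae (Filter.Eventually.of_forall fun ω => by
        simp [mul_comm])
    · intro A' hA' hC
      have hA'amb : MeasurableSet A' := hm2 _ hA'
      have h1 := integral_add_compl hA'amb (integrable_condExp (μ := P) (f := B.indicator (fun _ => (1:ℝ))) (m := mX))
      have h2 := integral_add_compl hA'amb hind_int
      have h3 : ∫ x, π x ∂P = ∫ x, B.indicator (fun _ => (1:ℝ)) x ∂P := integral_condExp hle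
      have h4 : (∫ x in A', π x ∂P) = ∫ x in A', B.indicator (fun _ => (1:ℝ)) x ∂P := hC
      linarith
    · intro g hdisj hgm hC
      have hgamb : ∀ i, MeasurableSet (g i) := fun i => hm2 _ (hgm i)
      have h1 := hasSum_integral_iUnion hgamb hdisj
        ((integrable_condExp (μ := P) (f := B.indicator (fun _ => (1:ℝ))) (m := mX)).integrableOn
          (s := ⋃ i, g i))
      have h2 := hasSum_integral_iUnion hgamb hdisj (hind_int.integrableOn (s := ⋃ i, g i))
      have h1' : (fun i => ∫ x in g i, π x ∂P)
          = fun i => ∫ x in g i, B.indicator (fun _ => (1:ℝ)) x ∂P := funext fun i => hC i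
      rw [h1'] at h1
      exact h1.unique h2
  exact (ae_eq_condExp_of_forall_setIntegral_eq hm2 hind_int
    (fun s _ _ => integrable_condExp.integrableOn)
    (fun s hs _ => key s hs)
    (((stronglyMeasurable_condExp (μ := P) (f := B.indicator (fun _ => (1:ℝ))) (m := mX)).mono (le_sup_left : mX ≤ mX ⊔ MeasurableSpace.comap Z mγ)).aestronglyMeasurable)).symm

lemma pullout_condIndep {Ω γ : Type*} {mX : MeasurableSpace Ω} [mΩ : MeasurableSpace Ω]
    [StandardBorelSpace Ω] [Nonempty Ω] [mγ : MeasurableSpace γ]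
    (P : Measure Ω) [IsProbabilityMeasure P]
    (hle : mX ≤ mΩ)
    {Z : Ω → γ} {S : Ω → Fin 2} (hZ : Measurable Z) (hS : Measurable S)
    (hcond : CondIndepFun mX hle Z S P)
    {f : Ω → ℝ} (hf : StronglyMeasurable[MeasurableSpace.comap Z mγ] f)
    (hfint : Integrable f P) (u : Set (Fin 2)) :
    P[fun ω => f ω * (S ⁻¹' u).indicator (fun _ => (1:ℝ)) ω | mX]
      =ᵐ[P] fun ω => (P[f | mX]) ω * (P[(S ⁻¹' u).indicator (fun _ => (1:ℝ)) | mX]) ω := by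
  have hm2 : mX ⊔ MeasurableSpace.comap Z mγ ≤ mΩ := sup_le hle hZ.comap_le
  have hu : MeasurableSet u := (Set.to_countable u).measurableSet
  have hB : MeasurableSet (S ⁻¹' u) := hS hu
  have hind_int : Integrable ((S ⁻¹' u).indicator (fun _ => (1:ℝ))) P :=
    (integrable_const (1:ℝ)).indicator hB
  have hint_mul : Integrable (f * (S ⁻¹' u).indicator (fun _ => (1:ℝ))) P := by
    have h2 := hfint.bdd_mul (c := 1) hind_int.aestronglyMeasurable
      (Filter.Eventually.of_forall (indicator_norm_le_one _))
    exact h2.congr (Filter.Eventually.of_forall (fun ω => mul_comm _ _))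
  set π : Ω → ℝ := P[(S ⁻¹' u).indicator (fun _ => (1:ℝ)) | mX] with hπdef
  have hπbd : ∀ᵐ ω ∂P, |π ω| ≤ ((1:ℝ≥0) : ℝ) :=
    ae_bdd_condExp_of_ae_bdd (R := 1) (Filter.Eventually.of_forall fun ω => by
      simpa using indicator_norm_le_one (S ⁻¹' u) ω)
  have hπf_int : Integrable (π * f) P := by
    refine hfint.bdd_mul (c := 1)
      ((stronglyMeasurable_condExp.mono hle).aestronglyMeasurable) ?_
    filter_upwards [hπbd] with ω hω
    simpa [Real.norm_eq_abs] using hω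
  have hsup := condexp_indicator_sup P hle hZ hS hcond u
  have hpull2 : P[f * (S ⁻¹' u).indicator (fun _ => (1:ℝ)) | mX ⊔ MeasurableSpace.comap Z mγ]
      =ᵐ[P] f * π := by
    refine (condExp_mul_of_stronglyMeasurable_left (hf.mono (le_sup_right : MeasurableSpace.comap Z mγ ≤ mX ⊔ MeasurableSpace.comap Z mγ)) hint_mul hind_int).trans ?_
    filter_upwards [hsup] with ω hω
    simp only [Pi.mul_apply, hω]
    rfl
  have htower := (condExp_condExp_of_le (μ := P)
    (f := f * (S ⁻¹' u).indicator (fun _ => (1:ℝ))) (le_sup_left) hm2).symm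
  have hfinal : P[f * (S ⁻¹' u).indicator (fun _ => (1:ℝ)) | mX] =ᵐ[P] π * P[f | mX] := by
    refine htower.trans ?_
    refine (condExp_congr_ae hpull2).trans ?_
    have hfe : f * π = π * f := by funext ω; simp [mul_comm]
    rw [hfe]
    exact condExp_mul_of_stronglyMeasurable_left stronglyMeasurable_condExp hπf_int hfint
  have hee : (fun ω => f ω * (S ⁻¹' u).indicator (fun _ => (1:ℝ)) ω)
      = f * (S ⁻¹' u).indicator (fun _ => (1:ℝ)) := rfl
  rw [hee]
  refine hfinal.trans ?_
  exact Filter.Eventually.of_forall fun ω => mul_comm (π ω) ((P[f|mX]) ω)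

lemma cell_key {Ω 𝒳 : Type*} {mX : MeasurableSpace Ω} [mΩ : MeasurableSpace Ω]
    [StandardBorelSpace Ω] [Nonempty Ω] [MeasurableSpace 𝒳]
    (P : Measure Ω) [IsProbabilityMeasure P]
    (T S : Ω → Fin 2) (X : Ω → 𝒳) (Y : Fin 2 → Fin 2 → Ω → ℝ)
    (hT : Measurable T) (hS : Measurable S) (hX : Measurable X)
    (hY : ∀ t s : Fin 2, Measurable (Y t s))
    (hYint : ∀ t s : Fin 2, Integrable (Y t s) P)
    (hindep : IndepFun T (fun ω => (Y 1 1 ω, Y 0 1 ω, Y 1 0 ω, Y 0 0 ω, S ω, X ω)) P)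
    (hle : mX ≤ mΩ)
    (hmX : mX = MeasurableSpace.comap X inferInstance)
    (hcond : ∀ t : Fin 2, CondIndepFun mX hle (fun ω => (Y t 1 ω, Y t 0 ω)) S P)
    (t s : Fin 2) :
    (P[fun ω' => Y (T ω') (S ω') ω' *
        ({ω'' | T ω'' = t ∧ S ω'' = s}.indicator (fun _ => (1 : ℝ)) ω') | mX]
      =ᵐ[P] fun ω => (P (T ⁻¹' {t})).toReal *
        ((P[Y t s | mX]) ω * (P[(S ⁻¹' {s}).indicator (fun _ => (1:ℝ)) | mX]) ω))
    ∧ (P[({ω'' | T ω'' = t ∧ S ω'' = s}.indicator (fun _ => (1:ℝ))) | mX]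
      =ᵐ[P] fun ω => (P (T ⁻¹' {t})).toReal *
        (P[(S ⁻¹' {s}).indicator (fun _ => (1:ℝ)) | mX]) ω) := by
  set W : Ω → ℝ × ℝ × ℝ × ℝ × Fin 2 × 𝒳 :=
    fun ω => (Y 1 1 ω, Y 0 1 ω, Y 1 0 ω, Y 0 0 ω, S ω, X ω) with hWdef
  have hW : Measurable W :=
    ((hY 1 1).prodMk ((hY 0 1).prodMk ((hY 1 0).prodMk
      ((hY 0 0).prodMk (hS.prodMk hX)))))
  have hXW : mX ≤ MeasurableSpace.comap W inferInstance := by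
    rw [hmX]
    rintro A ⟨B, hB, rfl⟩
    exact ⟨(fun v : ℝ × ℝ × ℝ × ℝ × Fin 2 × 𝒳 => v.2.2.2.2.2) ⁻¹' B,
      (measurable_snd.snd.snd.snd.snd) hB, rfl⟩
  have hBmW : MeasurableSet[MeasurableSpace.comap W inferInstance] (S ⁻¹' {s}) :=
    ⟨(fun v : ℝ × ℝ × ℝ × ℝ × Fin 2 × 𝒳 => v.2.2.2.2.1) ⁻¹' {s},
      (measurable_snd.snd.snd.snd.fst)
        (measurableSet_singleton s), rfl⟩
  have hmeas_comp : ∀ (q : ℝ × ℝ × ℝ × ℝ × Fin 2 × 𝒳 → ℝ), Measurable q →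
      StronglyMeasurable[MeasurableSpace.comap W inferInstance] (fun ω => q (W ω)) :=
    fun q hq => Measurable.stronglyMeasurable (hq.comp (measurable_comap_self W))
  have hYW : StronglyMeasurable[MeasurableSpace.comap W inferInstance] (Y t s) := by
    fin_cases t <;> fin_cases s
    · exact hmeas_comp (fun v => v.2.2.2.1) measurable_snd.snd.snd.fst
    · exact hmeas_comp (fun v => v.2.1) measurable_snd.fst
    · exact hmeas_comp (fun v => v.2.2.1) measurable_snd.snd.fst
    · exact hmeas_comp (fun v => v.1) measurable_fst
  set Z : Ω → ℝ × ℝ := fun ω => (Y t 1 ω, Y t 0 ω) with hZdef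
  have hZ : Measurable Z := (hY t 1).prodMk (hY t 0)
  have hfZ : StronglyMeasurable[MeasurableSpace.comap Z inferInstance] (Y t s) := by
    fin_cases s
    · exact Measurable.stronglyMeasurable (measurable_snd.comp (measurable_comap_self Z))
    · exact Measurable.stronglyMeasurable (measurable_fst.comp (measurable_comap_self Z))
  have hBsm : MeasurableSet (S ⁻¹' {s}) := hS (measurableSet_singleton s)
  have hind_int : Integrable ((S ⁻¹' {s}).indicator (fun _ => (1:ℝ))) P :=
    (integrable_const (1:ℝ)).indicator hBsm
  have hh : StronglyMeasurable[MeasurableSpace.comap W inferInstance]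
      (fun ω => Y t s ω * (S ⁻¹' {s}).indicator (fun _ => (1:ℝ)) ω) :=
    hYW.mul (stronglyMeasurable_const.indicator hBmW)
  have hint : Integrable (fun ω => Y t s ω * (S ⁻¹' {s}).indicator (fun _ => (1:ℝ)) ω) P := by
    have h2 := (hYint t s).bdd_mul (c := 1) hind_int.aestronglyMeasurable
      (Filter.Eventually.of_forall (indicator_norm_le_one _))
    exact h2.congr (Filter.Eventually.of_forall (fun ω => mul_comm _ _))
  constructor
  · -- numerator
    have hfun_eq : (fun ω' => Y (T ω') (S ω') ω' *
        ({ω'' | T ω'' = t ∧ S ω'' = s}.indicator (fun _ => (1 : ℝ)) ω'))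
        = fun ω => (T ⁻¹' {t}).indicator (fun _ => (1:ℝ)) ω *
            (Y t s ω * (S ⁻¹' {s}).indicator (fun _ => (1:ℝ)) ω) := by
      funext ω
      rcases eq_or_ne (T ω) t with hTt | hTt
      · rcases eq_or_ne (S ω) s with hSs | hSs
        · rw [hTt, hSs]
          have h1 : ω ∈ {ω'' | T ω'' = t ∧ S ω'' = s} := ⟨hTt, hSs⟩
          have h2 : ω ∈ T ⁻¹' {t} := hTt
          have h3 : ω ∈ S ⁻¹' {s} := hSs
          rw [Set.indicator_of_mem h1, Set.indicator_of_mem h2, Set.indicator_of_mem h3]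
          ring
        · have h1 : ω ∉ {ω'' | T ω'' = t ∧ S ω'' = s} := fun hc => hSs hc.2
          have h3 : ω ∉ S ⁻¹' {s} := hSs
          rw [Set.indicator_of_notMem h1, Set.indicator_of_notMem h3]
          ring
      · have h1 : ω ∉ {ω'' | T ω'' = t ∧ S ω'' = s} := fun hc => hTt hc.1
        have h2 : ω ∉ T ⁻¹' {t} := hTt
        rw [Set.indicator_of_notMem h1, Set.indicator_of_notMem h2]
        ring
    rw [hfun_eq]
    have num1 := pullout_indep P hT hW hindep hXW hh hint (measurableSet_singleton t)
    refine num1.trans ?_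
    have hc2 := pullout_condIndep P hle hZ hS (hcond t) hfZ (hYint t s) {s}
    filter_upwards [hc2] with ω hω
    rw [hω]
  · -- denominator
    have hden_fun : ({ω'' | T ω'' = t ∧ S ω'' = s}).indicator (fun _ => (1:ℝ))
        = fun ω => (T ⁻¹' {t}).indicator (fun _ => (1:ℝ)) ω *
            (S ⁻¹' {s}).indicator (fun _ => (1:ℝ)) ω := by
      funext ω
      rcases eq_or_ne (T ω) t with hTt | hTt
      · rcases eq_or_ne (S ω) s with hSs | hSs
        · have h1 : ω ∈ {ω'' | T ω'' = t ∧ S ω'' = s} := ⟨hTt, hSs⟩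
          have h2 : ω ∈ T ⁻¹' {t} := hTt
          have h3 : ω ∈ S ⁻¹' {s} := hSs
          rw [Set.indicator_of_mem h1, Set.indicator_of_mem h2, Set.indicator_of_mem h3]
          ring
        · have h1 : ω ∉ {ω'' | T ω'' = t ∧ S ω'' = s} := fun hc => hSs hc.2
          have h3 : ω ∉ S ⁻¹' {s} := hSs
          rw [Set.indicator_of_notMem h1, Set.indicator_of_notMem h3]
          ring
      · have h1 : ω ∉ {ω'' | T ω'' = t ∧ S ω'' = s} := fun hc => hTt hc.1
        have h2 : ω ∉ T ⁻¹' {t} := hTt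
        rw [Set.indicator_of_notMem h1, Set.indicator_of_notMem h2]
        ring
    rw [hden_fun]
    exact pullout_indep P hT hW hindep hXW
      (stronglyMeasurable_const.indicator hBmW) hind_int (measurableSet_singleton t)


/-- **Cell-level identification of the conditional potential-outcome means.** Under randomization
of the treatment (independence of `T` from the potential outcomes, moderator and covariates),
conditional independence of the potential outcomes and the moderator given `σ(X)`,
`0 < P(T=1) < 1`, and `0 < P(S=1 | σ(X)) < 1` a.s., for every `t, s ∈ {0,1}`, `P`-almost surely
`E[ Y_obs ⬝ 1{T=t,S=s} | σ(X) ] / P(T=t, S=s | σ(X)) = E[ Y t s | σ(X) ]`: the observed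
conditional mean of the outcome within each treatment–moderator cell, given the covariates,
identifies the conditional mean of the corresponding potential outcome. -/
theorem condexp_cell_identification
    {Ω 𝒳 : Type*} [MeasurableSpace Ω] [StandardBorelSpace Ω] [Nonempty Ω]
    [MeasurableSpace 𝒳]
    (P : Measure Ω) [IsProbabilityMeasure P]
    (T S : Ω → Fin 2) (X : Ω → 𝒳) (Y : Fin 2 → Fin 2 → Ω → ℝ)
    (hT : Measurable T) (hS : Measurable S) (hX : Measurable X)
    (hY : ∀ t s : Fin 2, Measurable (Y t s))
    (hYint : ∀ t s : Fin 2, Integrable (Y t s) P)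
    (hindep : IndepFun T (fun ω => (Y 1 1 ω, Y 0 1 ω, Y 1 0 ω, Y 0 0 ω, S ω, X ω)) P)
    (hcond : ∀ t : Fin 2,
      CondIndepFun (MeasurableSpace.comap X inferInstance) hX.comap_le
        (fun ω => (Y t 1 ω, Y t 0 ω)) S P)
    (hp0 : 0 < (P {ω | T ω = 1}).toReal) (hp1 : (P {ω | T ω = 1}).toReal < 1)
    (hπ : ∀ᵐ ω ∂P,
      0 < condProb P (MeasurableSpace.comap X inferInstance) {ω' | S ω' = 1} ω ∧
        condProb P (MeasurableSpace.comap X inferInstance) {ω' | S ω' = 1} ω < 1) :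
    ∀ t s : Fin 2, ∀ᵐ ω ∂P,
      (P[fun ω' => Y (T ω') (S ω') ω' *
          ({ω'' | T ω'' = t ∧ S ω'' = s}.indicator (fun _ => (1 : ℝ)) ω')
        | MeasurableSpace.comap X inferInstance]) ω /
        condProb P (MeasurableSpace.comap X inferInstance) {ω' | T ω' = t ∧ S ω' = s} ω =
      (P[Y t s | MeasurableSpace.comap X inferInstance]) ω := by
  intro t s
  obtain ⟨num, den⟩ := cell_key P T S X Y hT hS hX hY hYint hindep hX.comap_le rfl hcond t s
  have hp : 0 < (P (T ⁻¹' {t})).toReal := by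
    have ht01 := (by decide : ∀ x : Fin 2, x = 0 ∨ x = 1) t
    rcases ht01 with rfl | rfl
    · have hset : T ⁻¹' {(0 : Fin 2)} = {ω | T ω = 1}ᶜ := by
        ext ω
        have h01 : ∀ x : Fin 2, x = 0 ↔ ¬ x = 1 := by decide
        simpa using h01 (T ω)
      have hmeas : MeasurableSet {ω | T ω = 1} := hT (measurableSet_singleton 1)
      rw [hset, prob_compl_eq_one_sub hmeas,
        ENNReal.toReal_sub_of_le prob_le_one ENNReal.one_ne_top, ENNReal.toReal_one]
      linarith
    · exact hp0
  have hπs : ∀ᵐ ω ∂P, 0 < (P[(S ⁻¹' {s}).indicator (fun _ => (1:ℝ))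
      | MeasurableSpace.comap X inferInstance]) ω := by
    have hs01 := (by decide : ∀ x : Fin 2, x = 0 ∨ x = 1) s
    rcases hs01 with rfl | rfl
    · have hcompl : (S ⁻¹' {(0 : Fin 2)}) = (S ⁻¹' {(1 : Fin 2)})ᶜ := by
        ext ω
        have h01 : ∀ x : Fin 2, x = 0 ↔ ¬ x = 1 := by decide
        simpa using h01 (S ω)
      have hind : ((S ⁻¹' {(1 : Fin 2)})ᶜ).indicator (fun _ => (1:ℝ))
          = (fun _ => (1:ℝ)) - (S ⁻¹' {(1 : Fin 2)}).indicator (fun _ => (1:ℝ)) := by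
        funext ω
        by_cases h : ω ∈ S ⁻¹' {(1 : Fin 2)} <;> simp [h]
      have hsub := condExp_sub (μ := P) (m := MeasurableSpace.comap X inferInstance)
        (integrable_const (1:ℝ))
        ((integrable_const (1:ℝ)).indicator (hS (measurableSet_singleton 1)))
      have hconst := condExp_const (μ := P) hX.comap_le (1:ℝ)
      rw [hcompl, hind]
      filter_upwards [hsub, hπ] with ω h1 h3
      have h4 : (P[(S ⁻¹' {(1 : Fin 2)}).indicator (fun _ => (1:ℝ))
          | MeasurableSpace.comap X inferInstance]) ω < 1 := h3.2
      rw [h1]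
      simp only [Pi.sub_apply]
      rw [hconst]
      exact sub_pos.mpr h4
    · filter_upwards [hπ] with ω h3
      exact h3.1
  filter_upwards [num, den, hπs] with ω h1 h2 h3
  have h2' : condProb P (MeasurableSpace.comap X inferInstance)
      {ω' | T ω' = t ∧ S ω' = s} ω
      = (P (T ⁻¹' {t})).toReal * (P[(S ⁻¹' {s}).indicator (fun _ => (1:ℝ))
        | MeasurableSpace.comap X inferInstance]) ω := h2
  rw [h1, h2']
  field_simp
end
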